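/- arXiv:0811.2273 — 3 statements merged into one kernel-verified Lean document; each statement's English description precedes it below -/
import Mathlib

section
/- Let G be a compact Hausdorff group, U a continuous unitary representation of G on a complex Hilbert space 𝓗, and let H₁ ⊆ H₂ be closed subgroups of G. Then for every continuous finite-dimensional irreducible unitary representation σ of H₁ and every continuous finite-dimensional irreducible unitary representation τ of H₂, the isotypical projections commute: p_σ ∘ p_τ = p_τ ∘ p_σ as bounded operators on 𝓗. -/
open MeasureTheory ComplexConjugate Matrix

noncomputable section

/-- A continuous finite-dimensional unitary (matrix) representation of a topological group. -/
structure FinUnitaryRep (Γ : Type) [Group Γ] [TopologicalSpace Γ] where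
  dim : ℕ
  ρ : Γ →* Matrix.unitaryGroup (Fin dim) ℂ
  cont : Continuous fun g => (ρ g : Matrix (Fin dim) (Fin dim) ℂ)

namespace FinUnitaryRep

variable {Γ : Type} [Group Γ] [TopologicalSpace Γ]

/-- The character of a finite-dimensional representation. -/
def char (σ : FinUnitaryRep Γ) : Γ → ℂ :=
  fun g => Matrix.trace ((σ.ρ g : Matrix (Fin σ.dim) (Fin σ.dim) ℂ))

/-- Irreducibility: no nontrivial invariant subspace (and nonzero). -/
def IsIrreducible (σ : FinUnitaryRep Γ) : Prop :=
  0 < σ.dim ∧ ∀ W : Submodule ℂ (Fin σ.dim → ℂ),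
    (∀ g : Γ, ∀ v ∈ W, Matrix.mulVec ((σ.ρ g : Matrix (Fin σ.dim) (Fin σ.dim) ℂ)) v ∈ W) →
    W = ⊥ ∨ W = ⊤

/-- Restriction of a representation along a continuous group homomorphism. -/
@[reducible] def res {Δ : Type} [Group Δ] [TopologicalSpace Δ] (f : Δ →* Γ) (hf : Continuous f)
    (π : FinUnitaryRep Γ) : FinUnitaryRep Δ :=
  ⟨π.dim, π.ρ.comp f, π.cont.comp hf⟩

end FinUnitaryRep

variable {Γ : Type} [Group Γ] [TopologicalSpace Γ] [MeasurableSpace Γ]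

/-- The isotypical projection `p_σ = (dim σ) ∫ conj (χ_σ h) U h dμ(h)` associated to an
irreducible representation `σ`, for a representation `U` on a normed space. -/
def isoProj (μ : Measure Γ) {E : Type} [NormedAddCommGroup E] [NormedSpace ℂ E]
    (U : Γ →* (E →L[ℂ] E)) (σ : FinUnitaryRep Γ) : E →L[ℂ] E :=
  (σ.dim : ℂ) • ∫ h, (conj (σ.char h)) • U h ∂μ

/-- The isotypical projection on the representation space of a finite-dimensional
representation `π`, associated to an irreducible representation `σ`. -/
def isoVecProj (μ : Measure Γ) (π : FinUnitaryRep Γ) (σ : FinUnitaryRep Γ)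
    (v : Fin π.dim → ℂ) : Fin π.dim → ℂ :=
  (σ.dim : ℂ) • ∫ h, (conj (σ.char h)) • Matrix.mulVec ((π.ρ h : Matrix (Fin π.dim) (Fin π.dim) ℂ)) v ∂μ

variable {E₁ E₂ : Type} [NormedAddCommGroup E₁] [NormedSpace ℂ E₁]
  [NormedAddCommGroup E₂] [NormedSpace ℂ E₂]

/-- `B` is harmonically finite if `p_σ B p_τ = 0` for all but finitely many pairs of
(unitary equivalence classes of) irreducible representations, identified by their characters. -/
def HarmonicallyFinite (μ : Measure Γ) (U₁ : Γ →* (E₁ →L[ℂ] E₁)) (U₂ : Γ →* (E₂ →L[ℂ] E₂))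
    (B : E₁ →L[ℂ] E₂) : Prop :=
  {χ : (Γ → ℂ) × (Γ → ℂ) | ∃ σ τ : FinUnitaryRep Γ, σ.IsIrreducible ∧ τ.IsIrreducible ∧
    χ.1 = σ.char ∧ χ.2 = τ.char ∧
    (isoProj μ U₂ σ).comp (B.comp (isoProj μ U₁ τ)) ≠ 0}.Finite

/-- `B` is harmonically proper if each row and column of its harmonic matrix is finite. -/
def HarmonicallyProper (μ : Measure Γ) (U₁ : Γ →* (E₁ →L[ℂ] E₁)) (U₂ : Γ →* (E₂ →L[ℂ] E₂))
    (B : E₁ →L[ℂ] E₂) : Prop :=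
  ∀ σ : FinUnitaryRep Γ, σ.IsIrreducible →
    {χ : Γ → ℂ | ∃ τ : FinUnitaryRep Γ, τ.IsIrreducible ∧ χ = τ.char ∧
      ((isoProj μ U₂ σ).comp (B.comp (isoProj μ U₁ τ)) ≠ 0 ∨
       (isoProj μ U₂ τ).comp (B.comp (isoProj μ U₁ σ)) ≠ 0)}.Finite

/-- The operator-norm closure of the harmonically finite operators. -/
def KH (μ : Measure Γ) (U₁ : Γ →* (E₁ →L[ℂ] E₁)) (U₂ : Γ →* (E₂ →L[ℂ] E₂)) :
    Set (E₁ →L[ℂ] E₂) :=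
  closure {B | HarmonicallyFinite μ U₁ U₂ B}

/-- The operator-norm closure of the harmonically proper operators. -/
def AH (μ : Measure Γ) (U₁ : Γ →* (E₁ →L[ℂ] E₁)) (U₂ : Γ →* (E₂ →L[ℂ] E₂)) :
    Set (E₁ →L[ℂ] E₂) :=
  closure {B | HarmonicallyProper μ U₁ U₂ B}

end

/-! Characters are class functions and a Haar probability measure is also right invariant, so
conjugating the integrand `conj (χ_τ k) • U k` of `p_τ` by `U h`, `h ∈ H₂`, only reparametrizes the
integral by `k ↦ h k h⁻¹`: thus `p_τ` commutes with `U h` for all `h ∈ H₂ ⊇ H₁`, hence with the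
integral `p_σ` of such operators. -/

namespace FinUnitaryRep

theorem char_mul_mul_inv {Γ : Type} [Group Γ] [TopologicalSpace Γ] (τ : FinUnitaryRep Γ)
    (g h : Γ) : τ.char (g * h * g⁻¹) = τ.char h := by
  simp only [char, map_mul, Submonoid.coe_mul]
  rw [trace_mul_cycle, ← Submonoid.coe_mul, ← map_mul, inv_mul_cancel, map_one,
    OneMemClass.coe_one, one_mul]

end FinUnitaryRep

theorem Commute.integral_right {X A : Type*} [MeasurableSpace X] {μ : Measure X}
    [NormedRing A] [NormedSpace ℝ A] [IsScalarTower ℝ A A] [SMulCommClass ℝ A A]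
    {a : A} {f : X → A} (hf : ∀ x, Commute a (f x)) : Commute a (∫ x, f x ∂μ) := by
  by_cases hint : Integrable f μ
  · rw [Commute, SemiconjBy, ← integral_const_mul_of_integrable hint,
      ← integral_mul_const_of_integrable hint]
    exact integral_congr_ae (ae_of_all _ fun x => (hf x).eq)
  · simp [integral_undef hint]

theorem MeasureTheory.integral_mul_mul_inv_eq_self {G E : Type*} [Group G] [MeasurableSpace G]
    [MeasurableMul G] [NormedAddCommGroup E] [NormedSpace ℝ E] (μ : Measure G)
    [μ.IsMulLeftInvariant] [μ.IsMulRightInvariant] (f : G → E) (g : G) :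
    ∫ h, f (g * h * g⁻¹) ∂μ = ∫ h, f h ∂μ := by
  rw [integral_mul_left_eq_self (fun h => f (h * g⁻¹)) g, integral_mul_right_eq_self]

theorem MeasureTheory.Measure.isMulRightInvariant_of_isProbabilityMeasure {G : Type*} [Group G]
    [TopologicalSpace G] [IsTopologicalGroup G] [LocallyCompactSpace G] [MeasurableSpace G]
    [BorelSpace G]
    (μ : Measure G) [μ.IsHaarMeasure] [IsProbabilityMeasure μ] : μ.IsMulRightInvariant := by
  refine ⟨fun g => ?_⟩
  have : IsProbabilityMeasure (μ.map (· * g)) :=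
    Measure.isProbabilityMeasure_map (measurable_mul_const g).aemeasurable
  exact Measure.isHaarMeasure_eq_of_isProbabilityMeasure _ _

section isoProj

variable {Γ : Type} [Group Γ] [TopologicalSpace Γ] [MeasurableSpace Γ] (μ : Measure Γ)
  {E : Type} [NormedAddCommGroup E] [NormedSpace ℂ E] (V : Γ →* (E →L[ℂ] E))

theorem commute_isoProj_of_forall_commute {T : E →L[ℂ] E} (hT : ∀ h, Commute T (V h))
    (σ : FinUnitaryRep Γ) : Commute T (isoProj μ V σ) :=
  (Commute.integral_right fun h => (hT h).smul_right _).smul_right _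

theorem commute_isoProj [MeasurableMul Γ] [μ.IsMulLeftInvariant] [μ.IsMulRightInvariant]
    (τ : FinUnitaryRep Γ) (g : Γ) : Commute (V g) (isoProj μ V τ) := by
  set F : Γ → E →L[ℂ] E := fun h => conj (τ.char h) • V h
  have hconj : V g * (∫ h, F h ∂μ) * V g⁻¹ = ∫ h, F h ∂μ := by
    by_cases hF : Integrable F μ
    · calc V g * (∫ h, F h ∂μ) * V g⁻¹
          = ∫ h, V g * F h * V g⁻¹ ∂μ := by
            rw [integral_mul_const_of_integrable (hF.const_mul (V g)),
              integral_const_mul_of_integrable hF]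
        _ = ∫ h, F (g * h * g⁻¹) ∂μ := by
            congr 1
            ext1 h
            simp only [F, map_mul, FinUnitaryRep.char_mul_mul_inv, mul_smul_comm, smul_mul_assoc]
        _ = ∫ h, F h ∂μ := integral_mul_mul_inv_eq_self μ F g
    · simp [integral_undef hF]
  have hP : V g * isoProj μ V τ * V g⁻¹ = isoProj μ V τ := by
    rw [isoProj, mul_smul_comm, smul_mul_assoc, hconj]
  calc V g * isoProj μ V τ = V g * isoProj μ V τ * V g⁻¹ * V g := by
        rw [mul_assoc _ (V g⁻¹), ← map_mul, inv_mul_cancel, map_one, mul_one]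
    _ = isoProj μ V τ * V g := by rw [hP]

end isoProj

theorem isotypical_projections_commute_of_nested_subgroups_general
    {G : Type} [Group G] [TopologicalSpace G] [IsTopologicalGroup G]
    [CompactSpace G]
    {𝓗 : Type} [NormedAddCommGroup 𝓗] [InnerProductSpace ℂ 𝓗]
    (U : G →* (𝓗 →L[ℂ] 𝓗))
    (H₁ H₂ : Subgroup G) (hH₂ : IsClosed (H₂ : Set G))
    (hle : H₁ ≤ H₂)
    [MeasurableSpace H₁]
    (μ₁ : Measure H₁)
    [MeasurableSpace H₂] [BorelSpace H₂]
    (μ₂ : Measure H₂) [μ₂.IsHaarMeasure] [IsProbabilityMeasure μ₂]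
    (σ : FinUnitaryRep H₁)
    (τ : FinUnitaryRep H₂) :
    (isoProj μ₁ (U.comp H₁.subtype) σ).comp (isoProj μ₂ (U.comp H₂.subtype) τ) =
      (isoProj μ₂ (U.comp H₂.subtype) τ).comp (isoProj μ₁ (U.comp H₁.subtype) σ) := by
  have : CompactSpace H₂ := isCompact_iff_compactSpace.mp hH₂.isCompact
  have : μ₂.IsMulRightInvariant := Measure.isMulRightInvariant_of_isProbabilityMeasure μ₂
  have hcomm : ∀ h : H₁, Commute (isoProj μ₂ (U.comp H₂.subtype) τ) (U.comp H₁.subtype h) :=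
    fun h => (commute_isoProj μ₂ (U.comp H₂.subtype) τ (Subgroup.inclusion hle h)).symm
  exact (commute_isoProj_of_forall_commute μ₁ _ hcomm σ).symm.eq

theorem isotypical_projections_commute_of_nested_subgroups
    {G : Type} [Group G] [TopologicalSpace G] [IsTopologicalGroup G]
    [CompactSpace G] [T2Space G]
    {𝓗 : Type} [NormedAddCommGroup 𝓗] [InnerProductSpace ℂ 𝓗] [CompleteSpace 𝓗]
    (U : G →* (𝓗 →L[ℂ] 𝓗))
    (hUcont : ∀ ξ : 𝓗, Continuous fun g => U g ξ)
    (hUunit : ∀ (g : G) (x y : 𝓗), inner ℂ (U g x) (U g y) = (inner ℂ x y : ℂ))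
    (H₁ H₂ : Subgroup G) (hH₁ : IsClosed (H₁ : Set G)) (hH₂ : IsClosed (H₂ : Set G))
    (hle : H₁ ≤ H₂)
    [MeasurableSpace H₁] [BorelSpace H₁]
    (μ₁ : Measure H₁) [μ₁.IsHaarMeasure] [IsProbabilityMeasure μ₁]
    [MeasurableSpace H₂] [BorelSpace H₂]
    (μ₂ : Measure H₂) [μ₂.IsHaarMeasure] [IsProbabilityMeasure μ₂]
    (σ : FinUnitaryRep H₁) (hσ : σ.IsIrreducible)
    (τ : FinUnitaryRep H₂) (hτ : τ.IsIrreducible) :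
    (isoProj μ₁ (U.comp H₁.subtype) σ).comp (isoProj μ₂ (U.comp H₂.subtype) τ) =
      (isoProj μ₂ (U.comp H₂.subtype) τ).comp (isoProj μ₁ (U.comp H₁.subtype) σ) :=
  isotypical_projections_commute_of_nested_subgroups_general U H₁ H₂ hH₂ hle μ₁ μ₂ σ τ
end

section
/- For all natural numbers n ≥ 3 and m ≥ 0: ∑ ∏_{k=2}^{n−1} (2·m_k + k − 1) = (n−2)! · (binomial(m+n−2, n−2))², where the sum runs over all tuples (m₂, m₃, …, m_{n−1}) of natural numbers with 0 ≤ m₂ ≤ m₃ ≤ ⋯ ≤ m_{n−1} ≤ m. -/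
/-- Recursive form of the sum. -/
def G : ℕ → ℕ → ℕ
  | 0, _ => 1
  | N+1, m => ∑ t ∈ Finset.range (m+1), (2*t + N + 1) * G N t

lemma G_eq (N m : ℕ) : G N m = N.factorial * (Nat.choose (m+N) N)^2 := by
  induction N generalizing m with
  | zero => simp [G]
  | succ N ih =>
    simp only [G, ih]
    induction m with
    | zero =>
      simp [Nat.factorial_succ]
    | succ m ihm =>
      rw [Finset.sum_range_succ, ihm]
      have e0 : m + (N+1) = m+N+1 := by omega
      have e1 : m + 1 + (N+1) = m+1+N+1 := by omega
      have e2' : m + 1 + N = m+N+1 := by omega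
      rw [e0, e1, e2']
      set F := N.factorial with hF
      set b := Nat.choose (m+N+1) (N+1) with hb
      set c := Nat.choose (m+N+1) N with hc
      have h' : b * (N+1) = c * (m+1) := by
        have h := Nat.choose_succ_right_eq (m+N+1) N
        rw [← hb, ← hc] at h
        have : m + N + 1 - N = m + 1 := by omega
        rw [this] at h; exact h
      have hp : Nat.choose (m+N+1+1) (N+1) = c + b := by
        have := Nat.choose_succ_succ (m+N+1) N
        rw [← hb, ← hc] at this
        exact this
      rw [hp]
      have e2 : Nat.factorial (N+1) = (N+1) * F := by rw [Nat.factorial_succ]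
      rw [e2]
      calc (N+1)*F*b^2 + (2*(m+1)+N+1) * (F * c^2)
          = (N+1)*F*b^2 + (N+1)*F*c^2 + 2*F*c*(c*(m+1)) := by ring
        _ = (N+1)*F*b^2 + (N+1)*F*c^2 + 2*F*c*(b*(N+1)) := by rw [h']
        _ = (N+1)*F*(c+b)^2 := by ring

lemma key (N m : ℕ) :
    ∑ f ∈ Finset.univ.filter
        (fun f : Fin N → Fin (m + 1) => ∀ i j, i ≤ j → f i ≤ f j),
      ∏ i : Fin N, (2 * (f i : ℕ) + (i : ℕ) + 1) = G N m := by
  induction N generalizing m with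
  | zero =>
    rw [Finset.filter_true_of_mem (fun f _ i j _ => i.elim0)]
    simp [G]
  | succ N ih =>
    show _ = ∑ t ∈ Finset.range (m+1), (2*t + N + 1) * G N t
    rw [← Fin.sum_univ_eq_sum_range (fun t => (2*t + N + 1) * G N t) (m+1)]
    rw [← Finset.sum_fiberwise _ (fun f => f (Fin.last N))]
    refine Finset.sum_congr rfl ?_
    intro t _
    rw [← ih (t : ℕ), Finset.mul_sum, Finset.filter_filter]
    refine Finset.sum_nbij'
      (fun f k => (⟨min (f k.castSucc : ℕ) (t : ℕ), by omega⟩ : Fin ((t:ℕ)+1)))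
      (fun g => Fin.snoc (fun k => Fin.castLE (by omega) (g k)) t) ?_ ?_ ?_ ?_ ?_
    · intro f hf
      simp only [Finset.mem_filter, Finset.mem_univ, true_and] at hf ⊢
      obtain ⟨hmono, hlast⟩ := hf
      intro i j hij
      have hi : f i.castSucc ≤ t := hlast ▸ hmono _ _ (Fin.le_last _)
      have hj : f j.castSucc ≤ t := hlast ▸ hmono _ _ (Fin.le_last _)
      have := hmono i.castSucc j.castSucc (by simpa using hij)
      simp only [Fin.le_def, Fin.mk_le_mk] at *
      omega
    · intro g hg
      simp only [Finset.mem_filter, Finset.mem_univ, true_and] at hg ⊢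
      constructor
      · intro i j hij
        rcases Fin.eq_castSucc_or_eq_last i with ⟨i', rfl⟩ | rfl
        · rcases Fin.eq_castSucc_or_eq_last j with ⟨j', rfl⟩ | rfl
          · simp only [Fin.snoc_castSucc]
            have := hg i' j' (by simpa using hij)
            simp only [Fin.le_def, Fin.coe_castLE]
            exact this
          · simp only [Fin.snoc_castSucc, Fin.snoc_last]
            simp only [Fin.le_def, Fin.coe_castLE]
            omega
        · have : j = Fin.last N := le_antisymm (Fin.le_last _) hij
          subst this; exact le_refl _
      · simp
    · intro f hf
      simp only [Finset.mem_filter, Finset.mem_univ, true_and] at hf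
      obtain ⟨hmono, hlast⟩ := hf
      funext k
      rcases Fin.eq_castSucc_or_eq_last k with ⟨k', rfl⟩ | rfl
      · simp only [Fin.snoc_castSucc]
        have hk : (f k'.castSucc : ℕ) ≤ t := hlast ▸ hmono _ _ (Fin.le_last _)
        apply Fin.ext
        simp [hk, Nat.min_eq_left hk]
      · simp [Fin.snoc_last, hlast]
    · intro g hg
      funext k
      apply Fin.ext
      simp only [Fin.snoc_castSucc, Fin.castLE]
      have : (g k : ℕ) ≤ t := by omega
      simp [Nat.min_eq_left this]
    · intro f hf
      simp only [Finset.mem_filter, Finset.mem_univ, true_and] at hf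
      obtain ⟨hmono, hlast⟩ := hf
      rw [Fin.prod_univ_castSucc (fun i : Fin (N+1) => 2 * (f i : ℕ) + (i : ℕ) + 1)]
      rw [hlast]
      simp only [Fin.val_last, Fin.coe_castSucc]
      rw [mul_comm]
      have hprod : ∀ k ∈ (Finset.univ : Finset (Fin N)),
          (2 * (min (f k.castSucc : ℕ) (t : ℕ)) + (k : ℕ) + 1)
            = 2 * (f k.castSucc : ℕ) + (k : ℕ) + 1 := by
        intro k _
        have hk : (f k.castSucc : ℕ) ≤ t := hlast ▸ hmono _ _ (Fin.le_last _)
        simp [Nat.min_eq_left hk]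
      rw [Finset.prod_congr rfl hprod]

/-- The combinatorial identity
`∑ ∏_{k=2}^{n−1} (2 m_k + k − 1) = (n−2)! · C(m+n−2, n−2)²`,
where the sum is over all weakly increasing tuples `0 ≤ m₂ ≤ m₃ ≤ ⋯ ≤ m_{n−1} ≤ m`.
Here the tuple is encoded as a monotone function `f : Fin (n-2) → Fin (m+1)`,
with `f i` corresponding to `m_{i+2}`, so the factor for index `i` is
`2 f i + (i + 2) − 1 = 2 f i + i + 1`. -/
theorem sum_prod_weakly_increasing_identity (n m : ℕ) (hn : 3 ≤ n) :
    ∑ f ∈ Finset.univ.filter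
        (fun f : Fin (n - 2) → Fin (m + 1) => ∀ i j, i ≤ j → f i ≤ f j),
      ∏ i : Fin (n - 2), (2 * (f i : ℕ) + (i : ℕ) + 1) =
    Nat.factorial (n - 2) * Nat.choose (m + n - 2) (n - 2) ^ 2 := by
  rw [key (n-2) m, G_eq]
  have e : m + (n-2) = m + n - 2 := by omega
  rw [e]
end

section
/- For all natural numbers m and p: ∑_{i=0}^{m} (2i + p + 1) · (binomial(i+p, p))² = (p+1) · (binomial(m+p+1, p+1))². -/
/-- `∑_{i=0}^{m} (2i + p + 1) · C(i+p, p)² = (p+1) · C(m+p+1, p+1)²`. -/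
theorem sum_mul_choose_sq_identity (m p : ℕ) :
    ∑ i ∈ Finset.range (m + 1), (2 * i + p + 1) * Nat.choose (i + p) p ^ 2 =
      (p + 1) * Nat.choose (m + p + 1) (p + 1) ^ 2 := by
  induction m with
  | zero => simp
  | succ n ih =>
    rw [Finset.sum_range_succ, ih]
    have key : Nat.choose (n+p+1) (p+1) * (p+1) = Nat.choose (n+p+1) p * (n+1) := by
      have := Nat.choose_succ_right_eq (n+p+1) p
      rwa [show n+p+1-p = n+1 by omega] at this
    have hsplit : Nat.choose (n+1+p+1) (p+1)
        = Nat.choose (n+p+1) p + Nat.choose (n+p+1) (p+1) := by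
      rw [show n+1+p+1 = (n+p+1)+1 by ring]
      exact Nat.choose_succ_succ _ _
    have hidx : n+1+p = n+p+1 := by ring
    rw [hsplit, hidx]
    nlinarith [key]
end
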